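/- Fix 0 < δ < 1/5, 0 < r ≤ R, σ ∈ [r, R], and set τ = r. Let F = (1/2)(1 + erf(τ/(σ√2))). Suppose F_m ∈ [(1/2)(1 + erf((1-δ)r/(√2R))), (1/2)(1 + erf(1))] satisfies |F - F_m| ≤ δr/(√(2π)R). Define Λ = τ/(√2 · erf⁻¹(2F_m - 1)). Then |σ - Λ| ≤ 2√e · R · δ. -/

import Mathlib

/-- The Gaussian error function. -/
noncomputable def erf (x : ℝ) : ℝ :=
  (2 / Real.sqrt Real.pi) * ∫ t in (0:ℝ)..x, Real.exp (-t ^ 2)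

/-- The inverse of the Gaussian error function. -/
noncomputable def erfinv : ℝ → ℝ := Function.invFun erf

/-!
Put `x = τ / (σ √2)` and `y = erf⁻¹ (2 F_m - 1)`. Then `σ - Λ = (τ / √2) (x⁻¹ - y⁻¹)` and
`|erf x - erf y| = 2 |F - F_m|`. On `[0, √s]` the Gaussian density is at least `exp (-s)`, so there
`|x - y| ≤ (√π / 2) exp s |erf x - erf y|`, and `|x⁻¹ - y⁻¹| = |x - y| / (x y)`. The constraints
`τ / (√2 R) ≤ x ≤ 1 / √2` and `(1 - δ) τ / (√2 R) ≤ y ≤ 1` give `exp s / (x y) ≤ 4 √e R² / τ²`: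
if `y ≤ 1 / √2` take `s = 1 / 2`, otherwise take `s = 1` and use `x y ≥ τ / (2 R)` and `e < 4`.
-/

open Real Set

lemma continuous_exp_neg_sq : Continuous fun t : ℝ => exp (-t ^ 2) := by fun_prop

lemma erf_sub_erf (x y : ℝ) :
    erf x - erf y = 2 / √π * ∫ t in y..x, exp (-t ^ 2) := by
  rw [erf, erf, ← mul_sub, intervalIntegral.integral_interval_sub_left
    (continuous_exp_neg_sq.intervalIntegrable _ _) (continuous_exp_neg_sq.intervalIntegrable _ _)]

lemma erf_strictMono : StrictMono erf := fun y x hyx => by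
  have hint : 0 < ∫ t in y..x, exp (-t ^ 2) :=
    intervalIntegral.intervalIntegral_pos_of_pos (continuous_exp_neg_sq.intervalIntegrable _ _)
      (fun _ => exp_pos _) hyx
  have : 0 < erf x - erf y := by rw [erf_sub_erf]; positivity
  linarith

lemma continuous_erf : Continuous erf :=
  continuous_const.mul <| intervalIntegral.continuous_primitive
    (fun _ _ => continuous_exp_neg_sq.intervalIntegrable _ _) 0

lemma erfinv_erf (x : ℝ) : erfinv (erf x) = x :=
  Function.leftInverse_invFun erf_strictMono.injective x

lemma erfinv_mem_Icc_and_erf_erfinv {a b u : ℝ} (hab : a ≤ b) (hu : u ∈ Icc (erf a) (erf b)) :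
    erfinv u ∈ Icc a b ∧ erf (erfinv u) = u := by
  obtain ⟨y, hy, rfl⟩ := intermediate_value_Icc hab continuous_erf.continuousOn hu
  rw [erfinv_erf]
  exact ⟨hy, rfl⟩

lemma sub_mul_exp_neg_le_erf_sub {x y s : ℝ} (hy : 0 ≤ y) (hyx : y ≤ x) (hxs : x ^ 2 ≤ s) :
    (x - y) * exp (-s) ≤ √π / 2 * (erf x - erf y) := by
  have hint : (x - y) * exp (-s) ≤ ∫ t in y..x, exp (-t ^ 2) := by
    have := intervalIntegral.integral_mono_on (μ := MeasureTheory.volume) hyx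
      intervalIntegrable_const (continuous_exp_neg_sq.intervalIntegrable y x)
      (fun t ht => exp_le_exp.mpr (by nlinarith [ht.1, ht.2] : -s ≤ -t ^ 2))
    simpa using this
  rw [erf_sub_erf]
  field_simp
  linarith

lemma abs_sub_le_exp_mul_abs_erf_sub {x y s : ℝ} (hx : 0 ≤ x) (hy : 0 ≤ y)
    (hxs : x ^ 2 ≤ s) (hys : y ^ 2 ≤ s) :
    |x - y| ≤ √π / 2 * exp s * |erf x - erf y| := by
  wlog hyx : y ≤ x generalizing x y
  · rw [abs_sub_comm, abs_sub_comm (erf x)]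
    exact this hy hx hys hxs (le_of_not_ge hyx)
  have := sub_mul_exp_neg_le_erf_sub hy hyx hxs
  rw [abs_of_nonneg (sub_nonneg.mpr hyx),
    abs_of_nonneg (sub_nonneg.mpr (erf_strictMono.monotone hyx)), mul_right_comm,
    ← div_le_iff₀ (exp_pos s), div_eq_mul_inv, ← exp_neg]
  linarith

lemma abs_inv_sub_inv_le_mul_abs_erf_sub {a x y : ℝ} (ha : 0 < a) (hax : a ≤ x)
    (hx : x ^ 2 ≤ 1 / 2) (hay : a / 2 ≤ y) (hy : y ≤ 1) :
    |x⁻¹ - y⁻¹| ≤ √π * √(exp 1) / a ^ 2 * |erf x - erf y| := by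
  have hx0 : 0 < x := ha.trans_le hax
  have hy0 : 0 < y := by linarith
  have hxy : 0 < x * y := mul_pos hx0 hy0
  obtain ⟨s, hxs, hys, hs⟩ :
      ∃ s, x ^ 2 ≤ s ∧ y ^ 2 ≤ s ∧ exp s / (x * y) ≤ 2 * √(exp 1) / a ^ 2 := by
    rcases le_or_gt (y ^ 2) (1 / 2) with hy2 | hy2
    · refine ⟨1 / 2, hx, hy2, ?_⟩
      rw [div_le_div_iff₀ hxy (by positivity), ← exp_half, one_div]
      have : a ^ 2 ≤ 2 * (x * y) := by nlinarith
      nlinarith [exp_pos 2⁻¹]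
    · refine ⟨1, by linarith, by nlinarith, ?_⟩
      rw [div_le_div_iff₀ hxy (by positivity)]
      have : √(exp 1) * a ≤ 2 * y := by
        rw [← pow_le_pow_iff_left₀ (by positivity) (by positivity) two_ne_zero, mul_pow,
          sq_sqrt (exp_pos 1).le]
        nlinarith [exp_one_lt_d9]
      calc exp 1 * a ^ 2 = √(exp 1) * (√(exp 1) * a) * a := by
            linear_combination (-a ^ 2) * mul_self_sqrt (exp_pos 1).le
        _ ≤ √(exp 1) * (2 * y) * x := by gcongr
        _ = 2 * √(exp 1) * (x * y) := by ring
  calc |x⁻¹ - y⁻¹| = |x - y| / (x * y) := by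
        rw [inv_sub_inv hx0.ne' hy0.ne', abs_div, abs_sub_comm, abs_of_pos hxy]
    _ ≤ √π / 2 * exp s * |erf x - erf y| / (x * y) := by
        gcongr; exact abs_sub_le_exp_mul_abs_erf_sub hx0.le hy0.le hxs hys
    _ = √π / 2 * |erf x - erf y| * (exp s / (x * y)) := by ring
    _ ≤ √π / 2 * |erf x - erf y| * (2 * √(exp 1) / a ^ 2) := by gcongr
    _ = √π * √(exp 1) / a ^ 2 * |erf x - erf y| := by ring

theorem stmt_14_general (r R δ σ Fm : ℝ) (hδ0 : 0 < δ) (hδ : δ < 1 / 5)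
    (hr : 0 < r) (hσ : σ ∈ Set.Icc r R)
    (hFmIcc : Fm ∈ Set.Icc ((1 / 2) * (1 + erf ((1 - δ) * r / (Real.sqrt 2 * R))))
      ((1 / 2) * (1 + erf 1)))
    (hFm : |(1 / 2) * (1 + erf (r / (σ * Real.sqrt 2))) - Fm| ≤
      δ * r / (Real.sqrt (2 * Real.pi) * R)) :
    |σ - r / (Real.sqrt 2 * erfinv (2 * Fm - 1))| ≤
      2 * Real.sqrt (Real.exp 1) * R * δ := by
  obtain ⟨hrσ, hσR⟩ := hσ
  have hσ0 : 0 < σ := hr.trans_le hrσ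
  have hR0 : 0 < R := hσ0.trans_le hσR
  have hax : r / (√2 * R) ≤ r / (σ * √2) := by
    rw [mul_comm σ]; exact div_le_div_of_nonneg_left hr.le (by positivity) (by gcongr)
  have hx : (r / (σ * √2)) ^ 2 ≤ 1 / 2 := by
    rw [div_pow, mul_pow, sq_sqrt zero_le_two, div_le_iff₀ (by positivity)]
    nlinarith
  set a := r / (√2 * R)
  set x := r / (σ * √2)
  have ha : 0 < a := by positivity
  have hA1 : (1 - δ) * r / (√2 * R) ≤ 1 := by
    rw [mul_div_assoc]; nlinarith [mul_pos hδ0 ha]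
  obtain ⟨⟨hAy, hy1⟩, hy⟩ := erfinv_mem_Icc_and_erf_erfinv (u := 2 * Fm - 1) hA1
    ⟨by linarith [hFmIcc.1], by linarith [hFmIcc.2]⟩
  set y := erfinv (2 * Fm - 1)
  have hay : a / 2 ≤ y := le_trans (by rw [mul_div_assoc]; nlinarith) hAy
  have herf : |erf x - erf y| ≤ 2 * (δ * r / (√(2 * π) * R)) := by
    have : erf x - erf y = 2 * (1 / 2 * (1 + erf x) - Fm) := by rw [hy]; ring
    rw [this, abs_mul, abs_two]
    gcongr
  calc |σ - r / (√2 * y)| = r / √2 * |x⁻¹ - y⁻¹| := by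
        rw [← abs_of_pos (by positivity : 0 < r / √2), ← abs_mul]
        congr 1; simp only [x]; field_simp
    _ ≤ r / √2 * (√π * √(exp 1) / a ^ 2 * (2 * (δ * r / (√(2 * π) * R)))) := by
        gcongr; exact (abs_inv_sub_inv_le_mul_abs_erf_sub ha hax hx hay hy1).trans (by gcongr)
    _ = 2 * √(exp 1) * R * δ := by
        simp only [a]; rw [sqrt_mul zero_le_two]; field_simp

theorem stmt_14 (r R δ σ Fm : ℝ) (hδ0 : 0 < δ) (hδ : δ < 1 / 5)
    (hr : 0 < r) (hrR : r ≤ R) (hσ : σ ∈ Set.Icc r R)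
    (hFmIcc : Fm ∈ Set.Icc ((1 / 2) * (1 + erf ((1 - δ) * r / (Real.sqrt 2 * R))))
      ((1 / 2) * (1 + erf 1)))
    (hFm : |(1 / 2) * (1 + erf (r / (σ * Real.sqrt 2))) - Fm| ≤
      δ * r / (Real.sqrt (2 * Real.pi) * R)) :
    |σ - r / (Real.sqrt 2 * erfinv (2 * Fm - 1))| ≤
      2 * Real.sqrt (Real.exp 1) * R * δ :=
  stmt_14_general r R δ σ Fm hδ0 hδ hr hσ hFmIcc hFm
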